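/- arXiv:0711.3768 — 2 statements merged into one kernel-verified Lean document; each statement's English description precedes it below -/
import Mathlib

section
/- For any nonempty set Γ, the closed unit ball of ℓ^∞(Γ) (real-valued bounded functions on Γ with the sup norm) equals the closed convex hull of the set {−1, 1}^Γ of all functions Γ → {−1, 1}. -/
/-!
Every `x` in the unit ball of `ℓ^∞(Γ)` is the midpoint of a sign vector `s` (with `s γ` the sign
of `x γ`) and the point `2x - s`, which again lies in the unit ball. Iterating `n` times writes
`x` as a convex combination of sign vectors plus an error of norm at most `2⁻ⁿ` times the diameter
of the ball, so `x` lies in the closed convex hull of the sign vectors.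
-/

open Metric

theorem subset_closure_convexHull_of_forall_eq_midpoint {E : Type*} [SeminormedAddCommGroup E]
    [NormedSpace ℝ E] {B S : Set E} (hB : Bornology.IsBounded B) (hSB : S ⊆ B)
    (h : ∀ x ∈ B, ∃ s ∈ S, ∃ y ∈ B, midpoint ℝ s y = x) :
    B ⊆ closure (convexHull ℝ S) := by
  have approx : ∀ n : ℕ, ∀ x ∈ B, ∃ c ∈ convexHull ℝ S, dist x c ≤ (1 / 2) ^ n * diam B := by
    intro n
    induction n with
    | zero =>
      intro x hx
      obtain ⟨s, hs, -⟩ := h x hx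
      exact ⟨s, subset_convexHull ℝ S hs, by simpa using dist_le_diam_of_mem hB hx (hSB hs)⟩
    | succ n ih =>
      intro x hx
      obtain ⟨s, hs, y, hy, rfl⟩ := h x hx
      obtain ⟨c, hc, hyc⟩ := ih y hy
      refine ⟨midpoint ℝ s c,
        (convex_convexHull ℝ S).midpoint_mem (subset_convexHull ℝ S hs) hc, ?_⟩
      calc dist (midpoint ℝ s y) (midpoint ℝ s c) ≤ (dist s s + dist y c) / 2 :=
            dist_midpoint_midpoint_le s y s c
        _ ≤ (1 / 2) ^ (n + 1) * diam B := by rw [dist_self, pow_succ]; linarith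
  intro x hx
  refine Metric.mem_closure_iff.2 fun ε hε => ?_
  obtain ⟨n, hn⟩ := exists_pow_lt_of_lt_one (by positivity : 0 < ε / (diam B + 1))
    (by norm_num : (1 / 2 : ℝ) < 1)
  obtain ⟨c, hc, hxc⟩ := approx n x hx
  refine ⟨c, hc, hxc.trans_lt ?_⟩
  have hdiam : 0 ≤ diam B := diam_nonneg
  calc (1 / 2) ^ n * diam B ≤ (1 / 2) ^ n * (diam B + 1) := by gcongr; linarith
    _ < ε := by rwa [lt_div_iff₀ (by positivity)] at hn

theorem lp.infty_exists_sign_midpoint_eq {Γ : Type*} (x : lp (fun _ : Γ => ℝ) ⊤) (hx : ‖x‖ ≤ 1) :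
    ∃ s : lp (fun _ : Γ => ℝ) ⊤, (∀ γ, s γ = 1 ∨ s γ = -1) ∧
      ∃ y : lp (fun _ : Γ => ℝ) ⊤, ‖y‖ ≤ 1 ∧ midpoint ℝ s y = x := by
  let s : lp (fun _ : Γ => ℝ) ⊤ := ⟨fun γ => if 0 ≤ x γ then 1 else -1,
    memℓp_infty ⟨1, by rintro _ ⟨γ, rfl⟩; dsimp only; split_ifs <;> simp⟩⟩
  refine ⟨s, fun γ => by simp only [s]; split_ifs <;> simp,
    Equiv.pointReflection x s, ?_, (midpoint_eq_iff' ℝ).2 rfl⟩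
  refine lp.norm_le_of_forall_le zero_le_one fun γ => ?_
  have hxγ := abs_le.1 <| (lp.norm_apply_le_norm ENNReal.top_ne_zero x γ).trans hx
  have hcoe : (Equiv.pointReflection x s) γ = x γ - s γ + x γ := rfl
  rw [hcoe, Real.norm_eq_abs, abs_le]
  simp only [s]
  split_ifs <;> constructor <;> linarith

theorem stmt_3_general (Γ : Type*) :
    (Metric.closedBall (0 : lp (fun _ : Γ => ℝ) ⊤) 1) =
      closure (convexHull ℝ {x : lp (fun _ : Γ => ℝ) ⊤ | ∀ γ, x γ = 1 ∨ x γ = -1}) := by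
  set S := {x : lp (fun _ : Γ => ℝ) ⊤ | ∀ γ, x γ = 1 ∨ x γ = -1}
  have hSB : S ⊆ closedBall 0 1 := fun s hs => mem_closedBall_zero_iff.2 <|
    lp.norm_le_of_forall_le zero_le_one fun γ => by rcases hs γ with h | h <;> simp [h]
  refine subset_antisymm ?_
    (closure_minimal (convexHull_min hSB (convex_closedBall 0 1)) isClosed_closedBall)
  refine subset_closure_convexHull_of_forall_eq_midpoint isBounded_closedBall hSB fun x hx => ?_
  obtain ⟨s, hs, y, hy, hsy⟩ := lp.infty_exists_sign_midpoint_eq x (mem_closedBall_zero_iff.1 hx)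
  exact ⟨s, hs, y, mem_closedBall_zero_iff.2 hy, hsy⟩

theorem stmt_3 (Γ : Type*) [Nonempty Γ] :
    (Metric.closedBall (0 : lp (fun _ : Γ => ℝ) ⊤) 1) =
      closure (convexHull ℝ {x : lp (fun _ : Γ => ℝ) ⊤ | ∀ γ, x γ = 1 ∨ x γ = -1}) :=
  stmt_3_general Γ
end

section
/- Let 𝒰 be a non-principal ultrafilter on ℕ and let A, B ⊆ ℕ be infinite sets with A ∉ 𝒰 and B ∉ 𝒰. Then there exists a permutation h : ℕ → ℕ such that h(A) = B, and for every U ⊆ ℕ, h(U) ∈ 𝒰 if and only if U ∈ 𝒰. -/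
/-!
Let `S = A ∪ B ∪ C`, where `C` is an infinite subset of `(A ∪ B)ᶜ` outside `𝒰`; such a `C`
exists because the non-principal `𝒰` contains `(A ∪ B)ᶜ`, which is therefore infinite and can
be split into two infinite halves, one of which is not in `𝒰`. Then `S ∉ 𝒰`, and `A`, `B`,
`S \ A`, `S \ B` are all countably infinite, so some permutation of `S` maps `A` onto `B`.
Extended by the identity, it fixes every point of `Sᶜ ∈ 𝒰`, hence preserves `𝒰`.
-/

open Filter Set

theorem Set.Infinite.exists_infinite_subset_infinite_diff {α : Type*} {s : Set α}
    (hs : s.Infinite) : ∃ t ⊆ s, t.Infinite ∧ (s \ t).Infinite := by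
  set g : ℕ → α := fun n => hs.natEmbedding s n
  have hg : Function.Injective g :=
    Subtype.val_injective.comp (hs.natEmbedding s).injective
  have hmem (n : ℕ) : g n ∈ s := (hs.natEmbedding s n).2
  have hodd : (range fun n => g (2 * n + 1)).Infinite :=
    infinite_range_of_injective fun m n h => by have := hg h; omega
  refine ⟨range fun n => g (2 * n), range_subset_iff.2 fun n => hmem _,
    infinite_range_of_injective fun m n h => by have := hg h; omega, hodd.mono ?_⟩
  rintro _ ⟨n, rfl⟩
  refine ⟨hmem _, ?_⟩
  rintro ⟨m, hm⟩
  have := hg hm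
  omega

theorem Ultrafilter.exists_infinite_subset_notMem {α : Type*} {𝒰 : Ultrafilter α}
    (h𝒰 : ∀ a, {a} ∉ 𝒰) {D : Set α} (hD : D ∈ 𝒰) : ∃ C ⊆ D, C.Infinite ∧ C ∉ 𝒰 := by
  have hle : (𝒰 : Filter α) ≤ cofinite :=
    le_cofinite_iff_compl_singleton_mem.2 fun a => compl_mem_iff_notMem.2 (h𝒰 a)
  have hDinf : D.Infinite :=
    frequently_cofinite_iff_infinite.1 ((Eventually.frequently hD).filter_mono hle)
  obtain ⟨t, htD, ht, hDt⟩ := hDinf.exists_infinite_subset_infinite_diff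
  by_cases htU : t ∈ 𝒰
  · refine ⟨D \ t, sdiff_subset, hDt, fun h => ?_⟩
    exact compl_mem_iff_notMem.1 (mem_of_superset h (sdiff_subset_compl D t)) htU
  · exact ⟨t, htD, ht, htU⟩

theorem Equiv.Perm.exists_image_eq_of_subset {α : Type*} {A B S : Set α} (hAS : A ⊆ S)
    (hBS : B ⊆ S) (e : A ≃ B) (e' : ↥(S \ A) ≃ ↥(S \ B)) :
    ∃ σ : Equiv.Perm α, σ '' A = B ∧ ∀ x ∉ S, σ x = x := by
  classical
  let τ : Equiv.Perm S :=
    (Equiv.Set.sumDiffSubset hAS).symm.trans ((e.sumCongr e').trans (Equiv.Set.sumDiffSubset hBS))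
  have hτ (a : α) (ha : a ∈ A) : ofSubtype τ a = e ⟨a, ha⟩ := by
    rw [ofSubtype_apply_of_mem τ (hAS ha)]
    simp [τ, Equiv.Set.sumDiffSubset_symm_apply_of_mem hAS (x := ⟨a, hAS ha⟩) ha]
  refine ⟨ofSubtype τ, ?_, fun x hx => ofSubtype_apply_of_not_mem τ hx⟩
  ext b
  constructor
  · rintro ⟨a, ha, rfl⟩
    rw [hτ a ha]
    exact (e _).2
  · intro hb
    exact ⟨e.symm ⟨b, hb⟩, (e.symm _).2, by simp [hτ]⟩

theorem Equiv.Perm.image_mem_iff_of_eventually_fixed {α : Type*} {f : Filter α}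
    (σ : Equiv.Perm α) (hσ : ∀ᶠ x in f, σ x = x) (U : Set α) : σ '' U ∈ f ↔ U ∈ f := by
  have hsymm : σ.symm =ᶠ[f] id := hσ.mono fun x hx => σ.symm_apply_eq.2 hx.symm
  rw [Equiv.image_eq_preimage_symm, ← mem_map, map_congr hsymm, map_id]

theorem stmt_4 (𝒰 : Ultrafilter ℕ) (h𝒰 : ∀ n : ℕ, {n} ∉ 𝒰)
    (A B : Set ℕ) (hA : A.Infinite) (hB : B.Infinite)
    (hA𝒰 : A ∉ 𝒰) (hB𝒰 : B ∉ 𝒰) :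
    ∃ h : Equiv.Perm ℕ, h '' A = B ∧ ∀ U : Set ℕ, h '' U ∈ 𝒰 ↔ U ∈ 𝒰 := by
  have hAB : (A ∪ B)ᶜ ∈ 𝒰 :=
    Ultrafilter.compl_mem_iff_notMem.2 (by simp only [Ultrafilter.union_mem_iff]; tauto)
  obtain ⟨C, hC, hCinf, hC𝒰⟩ := 𝒰.exists_infinite_subset_notMem h𝒰 hAB
  set S := A ∪ B ∪ C
  have hS : Sᶜ ∈ 𝒰 :=
    Ultrafilter.compl_mem_iff_notMem.2 (by simp only [S, Ultrafilter.union_mem_iff]; tauto)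
  have hCA : C ⊆ S \ A := fun x hx => ⟨Or.inr hx, fun h => hC hx (Or.inl h)⟩
  have hCB : C ⊆ S \ B := fun x hx => ⟨Or.inr hx, fun h => hC hx (Or.inr h)⟩
  have : Infinite A := hA.to_subtype
  have : Infinite B := hB.to_subtype
  have : Infinite ↥(S \ A) := (hCinf.mono hCA).to_subtype
  have : Infinite ↥(S \ B) := (hCinf.mono hCB).to_subtype
  obtain ⟨σ, hσA, hσS⟩ := Equiv.Perm.exists_image_eq_of_subset (S := S)
    (subset_union_left.trans subset_union_left) (subset_union_right.trans subset_union_left)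
    nonempty_equiv_of_countable.some nonempty_equiv_of_countable.some
  exact ⟨σ, hσA, σ.image_mem_iff_of_eventually_fixed (mem_of_superset hS hσS)⟩
end
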